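/- arXiv:1710.06095 — 2 statements merged into one kernel-verified Lean document; each statement's English description precedes it below -/
import Mathlib

section
/- In G(Σ, e) one has the relation Σ_{i=1}^{2^ν} Ψ_{t_i} = −(12s₂ + 9·2^ν)·Ψ_t. -/
/-- The subgroup of relations: `e s • ψ s - e t • ψ t` for all `s t`, together with
`∑ s, ψ s`. -/
noncomputable def relSub {S : Type*} [Fintype S] (e : S → ℤ) : AddSubgroup (S →₀ ℤ) :=
  AddSubgroup.closure
    ({x | ∃ s t : S, x = Finsupp.single s (e s) - Finsupp.single t (e t)} ∪
      {∑ s : S, Finsupp.single s 1})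

/-- `G(Σ, e)`: the quotient of the free abelian group on `Σ` by the relations. -/
abbrev CompGrp {S : Type*} [Fintype S] (e : S → ℤ) : Type _ :=
  (S →₀ ℤ) ⧸ relSub e

/-- `Ψ s`: the image of the basis element `ψ s` in `G(Σ, e)`. -/
noncomputable def Psi {S : Type*} [Fintype S] (e : S → ℤ) (s : S) : CompGrp e :=
  QuotientAddGroup.mk (Finsupp.single s 1)

/-- `Σ = Σ₂ ⊔ Σ₄ ⊔ Σ₆` with `#Σ₂ = s₂` and `#Σ₄ = #Σ₆ = 2^ν`. -/
abbrev Sig4 (s₂ ν : ℕ) : Type := Fin s₂ ⊕ (Fin (2 ^ ν) ⊕ Fin (2 ^ ν))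

/-- `e ≡ 1` on `Σ₂`, `e ≡ 2` on `Σ₄` and `e ≡ 3` on `Σ₆`. -/
def e4 (s₂ ν : ℕ) : Sig4 s₂ ν → ℤ :=
  Sum.elim (fun _ => 1) (Sum.elim (fun _ => 2) (fun _ => 3))

/-- `w i` (`1`-based): the `i`-th point of `Σ₄ = {w_1, …, w_{2^ν}}`. -/
def wPt4 (s₂ ν : ℕ) (i : ℕ) : Sig4 s₂ ν :=
  Sum.inr (Sum.inl ⟨(i - 1) % 2 ^ ν, Nat.mod_lt _ (Nat.pow_pos (by norm_num))⟩)

/-- `t i` (`1`-based): the `i`-th point of `Σ₆ = {t_1, …, t_{2^ν}}`. -/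
def tPt4 (s₂ ν : ℕ) (i : ℕ) : Sig4 s₂ ν :=
  Sum.inr (Sum.inr ⟨(i - 1) % 2 ^ ν, Nat.mod_lt _ (Nat.pow_pos (by norm_num))⟩)

/-- The generators `u_j` (`1`-based, `u_0 := Ψ w` with `w = w_{2^ν - 1}`):
for `1 ≤ k ≤ 2^{ν-1} - 2`, `u_{2k-1} = Ψ w_{2k-1} - Ψ w` and
`u_{2k} = Ψ w_{2k-1} + Ψ w_{2k} - Ψ w - Ψ w'` (with `w' = w_{2^ν}`); and
`u_{2^ν-3} = Ψ w_{2^ν-3} - Ψ w` (the odd-index formula again),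
`u_{2^ν-2} = Ψ w_{2^ν-3} - Ψ w_{2^ν-2}`. -/
noncomputable def uGen4 (s₂ ν : ℕ) : ℕ → CompGrp (e4 s₂ ν) := fun j =>
  if j = 0 then Psi (e4 s₂ ν) (wPt4 s₂ ν (2 ^ ν - 1))
  else if j = 2 ^ ν - 2 then
    Psi (e4 s₂ ν) (wPt4 s₂ ν (2 ^ ν - 3)) - Psi (e4 s₂ ν) (wPt4 s₂ ν (2 ^ ν - 2))
  else if j % 2 = 1 then
    Psi (e4 s₂ ν) (wPt4 s₂ ν j) - Psi (e4 s₂ ν) (wPt4 s₂ ν (2 ^ ν - 1))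
  else
    Psi (e4 s₂ ν) (wPt4 s₂ ν (j - 1)) + Psi (e4 s₂ ν) (wPt4 s₂ ν j)
      - Psi (e4 s₂ ν) (wPt4 s₂ ν (2 ^ ν - 1)) - Psi (e4 s₂ ν) (wPt4 s₂ ν (2 ^ ν))

/-- The generators `v_j` (`1`-based): `v_{2k-1} = Ψ t_{2k-1} - Ψ t_{2k}` for
`1 ≤ k ≤ 2^{ν-1}` and `v_{2k} = Ψ t_{2k-1} + Ψ t_{2k} - Ψ t - Ψ t'` for
`1 ≤ k ≤ 2^{ν-1} - 1` (with `t = t_{2^ν - 1}`, `t' = t_{2^ν}`). -/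
noncomputable def vGen4 (s₂ ν : ℕ) : ℕ → CompGrp (e4 s₂ ν) := fun j =>
  if j % 2 = 1 then
    Psi (e4 s₂ ν) (tPt4 s₂ ν j) - Psi (e4 s₂ ν) (tPt4 s₂ ν (j + 1))
  else
    Psi (e4 s₂ ν) (tPt4 s₂ ν (j - 1)) + Psi (e4 s₂ ν) (tPt4 s₂ ν j)
      - Psi (e4 s₂ ν) (tPt4 s₂ ν (2 ^ ν - 1)) - Psi (e4 s₂ ν) (tPt4 s₂ ν (2 ^ ν))

section CompGrp

variable {S : Type*} [Fintype S] (e : S → ℤ)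

theorem zsmul_Psi_eq_zsmul_Psi (s t : S) : e s • Psi e s = e t • Psi e t := by
  have hmk : ∀ u, e u • Psi e u = QuotientAddGroup.mk (Finsupp.single u (e u)) := fun u => by
    rw [Psi, ← QuotientAddGroup.mk_zsmul, Finsupp.smul_single, smul_eq_mul, mul_one]
  rw [hmk, hmk, QuotientAddGroup.eq, neg_add_eq_sub]
  exact AddSubgroup.subset_closure (Or.inl ⟨t, s, rfl⟩)

theorem mul_zsmul_Psi_eq_mul_zsmul_Psi (s t : S) (k : ℤ) :
    (e s * k) • Psi e s = (e t * k) • Psi e t := by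
  rw [mul_comm, mul_zsmul, zsmul_Psi_eq_zsmul_Psi e s t, ← mul_zsmul, mul_comm]

theorem sum_Psi_eq_zero : ∑ s, Psi e s = 0 :=
  (map_sum (QuotientAddGroup.mk' (relSub e)) (fun s => Finsupp.single s 1) _).symm.trans <|
    (QuotientAddGroup.eq_zero_iff _).2 (AddSubgroup.subset_closure (Or.inr rfl))

end CompGrp

theorem sum_Icc_tPt4 {M : Type*} [AddCommMonoid M] (s₂ ν : ℕ) (f : Sig4 s₂ ν → M) :
    ∑ i ∈ Finset.Icc 1 (2 ^ ν), f (tPt4 s₂ ν i) = ∑ c : Fin (2 ^ ν), f (Sum.inr (Sum.inr c)) := by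
  rw [← Finset.Ico_add_one_right_eq_Icc, Finset.sum_Ico_eq_sum_range, Nat.add_sub_cancel,
    ← Fin.sum_univ_eq_sum_range]
  refine Finset.sum_congr rfl fun c _ => congrArg f ?_
  simp [tPt4, Nat.mod_eq_of_lt c.isLt]

/-- Every `e s • Ψ s` equals `3 • Ψ t`, so multiplying `∑ Ψ_s = 0` by `4` turns the terms over
`Σ₂` and `Σ₄` into `12 • Ψ t` and `6 • Ψ t`, while `4 • Ψ t_i = Ψ t_i + 3 • Ψ t`. -/
theorem stmt13_general (s₂ ν : ℕ) :
    ∑ i ∈ Finset.Icc 1 (2 ^ ν), Psi (e4 s₂ ν) (tPt4 s₂ ν i) =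
      -((12 * s₂ + 9 * 2 ^ ν) • Psi (e4 s₂ ν) (tPt4 s₂ ν (2 ^ ν - 1))) := by
  set T := Psi (e4 s₂ ν) (tPt4 s₂ ν (2 ^ ν - 1))
  have h₂ (a : Fin s₂) : (4 : ℤ) • Psi (e4 s₂ ν) (Sum.inl a) = (12 : ℤ) • T :=
    mul_zsmul_Psi_eq_mul_zsmul_Psi (e4 s₂ ν) (Sum.inl a) _ 4
  have h₄ (b : Fin (2 ^ ν)) : (4 : ℤ) • Psi (e4 s₂ ν) (Sum.inr (Sum.inl b)) = (6 : ℤ) • T :=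
    mul_zsmul_Psi_eq_mul_zsmul_Psi (e4 s₂ ν) (Sum.inr (Sum.inl b)) _ 2
  have h₆ (c : Fin (2 ^ ν)) : (4 : ℤ) • Psi (e4 s₂ ν) (Sum.inr (Sum.inr c)) =
      Psi (e4 s₂ ν) (Sum.inr (Sum.inr c)) + (3 : ℤ) • T := by
    rw [show (4 : ℤ) = 1 + e4 s₂ ν (Sum.inr (Sum.inr c)) from rfl, add_zsmul, one_zsmul,
      zsmul_Psi_eq_zsmul_Psi (e4 s₂ ν) _ (tPt4 s₂ ν (2 ^ ν - 1))]
    rfl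
  have hsum : ∑ s, (4 : ℤ) • Psi (e4 s₂ ν) s = 0 := by
    rw [← Finset.smul_sum, sum_Psi_eq_zero, smul_zero]
  simp only [Fintype.sum_sum_type, h₂, h₄, h₆,
    Finset.sum_add_distrib, Finset.sum_const, Finset.card_univ, Fintype.card_fin] at hsum
  rw [sum_Icc_tPt4, eq_neg_iff_add_eq_zero, ← hsum]
  module

/-- in `G(Σ, e)` one has `∑_{i=1}^{2^ν} Ψ t_i = -(12s₂ + 9·2^ν) • Ψ t`,
where `t = t_{2^ν - 1}`. -/
theorem stmt13 (s₂ ν : ℕ) (hν : 1 ≤ ν) :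
    ∑ i ∈ Finset.Icc 1 (2 ^ ν), Psi (e4 s₂ ν) (tPt4 s₂ ν i) =
      -((12 * s₂ + 9 * 2 ^ ν) • Psi (e4 s₂ ν) (tPt4 s₂ ν (2 ^ ν - 1))) :=
  stmt13_general s₂ ν
end

section
/- For every 1 ≤ i ≤ 2^ν, the element Ψ_{w_i} has order 2m = 2(6s₂ + 5·2^ν) in G(Σ, e), and the element Ψ_{t_i} has order 3m = 3(6s₂ + 5·2^ν) in G(Σ, e). -/
/-!
With `c := 6 / e` (so `c t * e t = 6`) and `m := ∑ c = 6 s₂ + 5·2^ν`, the relations give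
`m e(s) Ψ_s = ∑ c_t e_t Ψ_t = 6 ∑ Ψ_t = 0`. Conversely, for an index `j` other than that of the
given point (here `2^ν ≥ 2` is needed), `Ψ_s ↦ c_s (1 + m [s ∈ {w_j, t_j}])` is a homomorphism
to `ℤ/6m`: every `e_s`-multiple of an image is `6 + 6m·(…) ≡ 6`, and the images sum to
`m + 5m ≡ 0`. Since `c_s ∣ 6m`, the image `c_s` of `Ψ_s` has order `6m / c_s = m e_s`.
-/

theorem addOrderOf_eq_of_nsmul_eq_zero_of_map {G H : Type*} [AddGroup G] [AddGroup H]
    (φ : G →+ H) {x : G} {n : ℕ} (hx : n • x = 0) (hφ : addOrderOf (φ x) = n) :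
    addOrderOf x = n :=
  Nat.dvd_antisymm (addOrderOf_dvd_of_nsmul_eq_zero hx) (hφ ▸ addOrderOf_map_dvd φ x)

theorem addOrderOf_natCast_of_dvd {a n : ℕ} (hn : n ≠ 0) (h : a ∣ n) :
    addOrderOf (a : ZMod n) = n / a := by
  rw [ZMod.addOrderOf_coe _ hn, Nat.gcd_eq_right h]

namespace CompGrp

variable {S : Type*} [Fintype S] {e : S → ℤ}

theorem zsmul_Psi_eq_zsmul_Psi (s t : S) : e s • Psi e s = e t • Psi e t := by
  rw [← sub_eq_zero, Psi, Psi, ← QuotientAddGroup.mk_zsmul, ← QuotientAddGroup.mk_zsmul,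
    ← QuotientAddGroup.mk_sub, QuotientAddGroup.eq_zero_iff, Finsupp.smul_single_one,
    Finsupp.smul_single_one]
  exact AddSubgroup.subset_closure (Or.inl ⟨s, t, rfl⟩)

theorem sum_Psi : ∑ s, Psi e s = 0 := by
  simp only [Psi, ← QuotientAddGroup.mk_sum, QuotientAddGroup.eq_zero_iff]
  exact AddSubgroup.subset_closure (Or.inr rfl)

theorem zsmul_Psi_eq_zero {n : ℤ} (c : S → ℤ) (hc : ∀ t, c t * e t = n) (s : S) :
    ((∑ t, c t) * e s) • Psi e s = 0 :=
  calc ((∑ t, c t) * e s) • Psi e s = ∑ t, c t • e t • Psi e t := by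
        rw [Finset.sum_mul, Finset.sum_smul (M := CompGrp e)]
        exact Finset.sum_congr rfl fun t _ => by rw [mul_smul, zsmul_Psi_eq_zsmul_Psi s t]
    _ = n • ∑ t, Psi e t := by simp only [Finset.smul_sum, ← mul_smul, hc]
    _ = 0 := by rw [sum_Psi, smul_zero]

noncomputable def lift {A : Type*} [AddCommGroup A] (f : S → A)
    (hf : ∀ s t, e s • f s = e t • f t) (hsum : ∑ s, f s = 0) : CompGrp e →+ A :=
  QuotientAddGroup.lift _ (Finsupp.linearCombination ℤ f).toAddMonoidHom <| by
    rw [relSub, AddSubgroup.closure_le]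
    rintro x (⟨s, t, rfl⟩ | rfl)
    · simp [Finsupp.linearCombination_single, hf s t]
    · simp [map_sum, Finsupp.linearCombination_single, hsum]

theorem lift_Psi {A : Type*} [AddCommGroup A] (f : S → A)
    (hf : ∀ s t, e s • f s = e t • f t) (hsum : ∑ s, f s = 0) (s : S) :
    lift f hf hsum (Psi e s) = f s := by
  simp [lift, Psi, Finsupp.linearCombination_single]

end CompGrp

section Sig4

variable {s₂ ν : ℕ}

def cofactor4 (s₂ ν : ℕ) : Sig4 s₂ ν → ℕ :=
  Sum.elim (fun _ => 6) (Sum.elim (fun _ => 3) (fun _ => 2))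

theorem cofactor4_mul_e4 (s : Sig4 s₂ ν) : (cofactor4 s₂ ν s : ℤ) * e4 s₂ ν s = 6 := by
  rcases s with _ | _ | _ <;> rfl

theorem sum_cofactor4 : ∑ s, cofactor4 s₂ ν s = 6 * s₂ + 5 * 2 ^ ν := by
  simp only [cofactor4, Fintype.sum_sum_type, Sum.elim_inl, Sum.elim_inr, Finset.sum_const,
    Finset.card_univ, Fintype.card_fin, smul_eq_mul]
  ring

def pairIndicator4 (j : Fin (2 ^ ν)) : Sig4 s₂ ν → ℕ :=
  Sum.elim 0 (Sum.elim (Pi.single j 1) (Pi.single j 1))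

theorem sum_cofactor4_mul_pairIndicator4 (j : Fin (2 ^ ν)) :
    ∑ s, cofactor4 s₂ ν s * pairIndicator4 j s = 5 := by
  simp [cofactor4, pairIndicator4, Fintype.sum_sum_type, Pi.single_apply]

def testVal4 (j : Fin (2 ^ ν)) (s : Sig4 s₂ ν) : ZMod (6 * (6 * s₂ + 5 * 2 ^ ν)) :=
  (cofactor4 s₂ ν s * (1 + (6 * s₂ + 5 * 2 ^ ν) * pairIndicator4 j s) : ℕ)

theorem e4_zsmul_testVal4 (j : Fin (2 ^ ν)) (s : Sig4 s₂ ν) :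
    e4 s₂ ν s • testVal4 j s = 6 := by
  have h6 : ((6 * (6 * s₂ + 5 * 2 ^ ν) : ℕ) : ZMod (6 * (6 * s₂ + 5 * 2 ^ ν))) = 0 :=
    ZMod.natCast_self _
  have hce := congrArg (Int.cast : ℤ → ZMod (6 * (6 * s₂ + 5 * 2 ^ ν))) (cofactor4_mul_e4 s)
  rw [testVal4, zsmul_eq_mul]
  push_cast at h6 hce ⊢
  linear_combination
    (1 + (6 * s₂ + 5 * 2 ^ ν) * pairIndicator4 j s : ZMod (6 * (6 * s₂ + 5 * 2 ^ ν))) * hce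
      + (pairIndicator4 j s : ZMod (6 * (6 * s₂ + 5 * 2 ^ ν))) * h6

theorem sum_testVal4 (j : Fin (2 ^ ν)) : ∑ s, testVal4 (s₂ := s₂) j s = 0 := by
  have hsum : ∑ s, cofactor4 s₂ ν s * (1 + (6 * s₂ + 5 * 2 ^ ν) * pairIndicator4 j s)
      = 6 * (6 * s₂ + 5 * 2 ^ ν) := by
    simp only [mul_add, mul_one, Finset.sum_add_distrib, mul_left_comm _ (6 * s₂ + 5 * 2 ^ ν),
      ← Finset.mul_sum, sum_cofactor4, sum_cofactor4_mul_pairIndicator4]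
    ring
  simp only [testVal4, ← Nat.cast_sum, hsum, ZMod.natCast_self]

noncomputable def testChar4 (j : Fin (2 ^ ν)) :
    CompGrp (e4 s₂ ν) →+ ZMod (6 * (6 * s₂ + 5 * 2 ^ ν)) :=
  CompGrp.lift (testVal4 j) (fun s t => by rw [e4_zsmul_testVal4, e4_zsmul_testVal4])
    (sum_testVal4 j)

theorem testChar4_Psi_of_pairIndicator4_eq_zero {j : Fin (2 ^ ν)} {s : Sig4 s₂ ν}
    (hs : pairIndicator4 j s = 0) : testChar4 j (Psi (e4 s₂ ν) s) = cofactor4 s₂ ν s := by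
  simp [testChar4, CompGrp.lift_Psi, testVal4, hs]

theorem zsmul_Psi4_eq_zero (s : Sig4 s₂ ν) :
    ((6 * s₂ + 5 * 2 ^ ν : ℕ) * e4 s₂ ν s) • Psi (e4 s₂ ν) s = 0 := by
  simpa only [← Nat.cast_sum, sum_cofactor4] using
    CompGrp.zsmul_Psi_eq_zero (fun t => (cofactor4 s₂ ν t : ℤ)) cofactor4_mul_e4 s

theorem addOrderOf_Psi4_of_pairIndicator4_eq_zero {j : Fin (2 ^ ν)} {s : Sig4 s₂ ν}
    (hs : pairIndicator4 j s = 0) :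
    addOrderOf (Psi (e4 s₂ ν) s) = 6 * (6 * s₂ + 5 * 2 ^ ν) / cofactor4 s₂ ν s := by
  have hce := cofactor4_mul_e4 s
  have hc : cofactor4 s₂ ν s ∣ 6 * (6 * s₂ + 5 * 2 ^ ν) :=
    Dvd.dvd.mul_right (Int.natCast_dvd_natCast.mp ⟨e4 s₂ ν s, hce.symm⟩) _
  have hc0 : (cofactor4 s₂ ν s : ℤ) ≠ 0 := by
    rintro h
    simp [h] at hce
  refine addOrderOf_eq_of_nsmul_eq_zero_of_map (testChar4 j) ?_ ?_
  · have hdiv : ((6 * (6 * s₂ + 5 * 2 ^ ν) / cofactor4 s₂ ν s : ℕ) : ℤ)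
        = (6 * s₂ + 5 * 2 ^ ν : ℕ) * e4 s₂ ν s := by
      rw [Int.natCast_div, Int.ediv_eq_of_eq_mul_right hc0]
      push_cast
      linear_combination (-(6 * s₂ + 5 * 2 ^ ν : ℤ)) * hce
    rw [← natCast_zsmul, hdiv, zsmul_Psi4_eq_zero]
  · rw [testChar4_Psi_of_pairIndicator4_eq_zero hs,
      addOrderOf_natCast_of_dvd (by positivity) hc]

variable [Nontrivial (Fin (2 ^ ν))]

theorem addOrderOf_Psi4_inr_inl (i : Fin (2 ^ ν)) :
    addOrderOf (Psi (e4 s₂ ν) (.inr (.inl i))) = 2 * (6 * s₂ + 5 * 2 ^ ν) := by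
  obtain ⟨j, hj⟩ := exists_ne i
  rw [addOrderOf_Psi4_of_pairIndicator4_eq_zero (j := j) (by simp [pairIndicator4, hj])]
  change _ / 3 = _
  omega

theorem addOrderOf_Psi4_inr_inr (i : Fin (2 ^ ν)) :
    addOrderOf (Psi (e4 s₂ ν) (.inr (.inr i))) = 3 * (6 * s₂ + 5 * 2 ^ ν) := by
  obtain ⟨j, hj⟩ := exists_ne i
  rw [addOrderOf_Psi4_of_pairIndicator4_eq_zero (j := j) (by simp [pairIndicator4, hj])]
  change _ / 2 = _
  omega

end Sig4

/-- each `Ψ w_i` (`1 ≤ i ≤ 2^ν`) has order `2m = 2(6s₂ + 5·2^ν)` and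
each `Ψ t_i` has order `3m = 3(6s₂ + 5·2^ν)` in `G(Σ, e)`. -/
theorem stmt14 (s₂ ν : ℕ) (hν : 1 ≤ ν) :
    ∀ i : ℕ, 1 ≤ i → i ≤ 2 ^ ν →
      addOrderOf (Psi (e4 s₂ ν) (wPt4 s₂ ν i)) = 2 * (6 * s₂ + 5 * 2 ^ ν) ∧
      addOrderOf (Psi (e4 s₂ ν) (tPt4 s₂ ν i)) = 3 * (6 * s₂ + 5 * 2 ^ ν) := by
  have : Nontrivial (Fin (2 ^ ν)) :=
    Fin.nontrivial_iff_two_le.mpr (le_self_pow₀ one_le_two (by omega))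
  exact fun _ _ _ => ⟨addOrderOf_Psi4_inr_inl _, addOrderOf_Psi4_inr_inr _⟩
end
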